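/- arXiv:2501.07673 — 3 statements merged into one kernel-verified Lean document; each statement's English description precedes it below -/
import Mathlib

section
/- Let X be an arithmetic L-space. Then: (1) if U is a clopen Scott upset of X, then d U = U**; and (2) for every clopen upset U of X and every x ∈ X, x ∈ core_d U if and only if ↑x ⊆ ↓(core U). -/
open Set Topology

variable {X : Type*} [TopologicalSpace X] [PartialOrder X]

/-- The downward closure `↓A` of a subset of a poset. -/
def dwC (A : Set X) : Set X := {x : X | ∃ a ∈ A, x ≤ a}

/-- The upward closure `↑A` of a subset of a poset. -/
def upC (A : Set X) : Set X := {x : X | ∃ a ∈ A, a ≤ x}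

/-- The set of maximal points of a subset of a poset. -/
def maxOf (A : Set X) : Set X := {x ∈ A | ∀ z ∈ A, x ≤ z → z = x}

/-- The set of minimal points of a subset of a poset. -/
def minOf (A : Set X) : Set X := {x ∈ A | ∀ z ∈ A, z ≤ x → z = x}

/-- A Priestley space: compact with the Priestley separation axiom. -/
def IsPriestley (X : Type*) [TopologicalSpace X] [PartialOrder X] : Prop :=
  CompactSpace X ∧
    ∀ x y : X, ¬x ≤ y → ∃ U : Set X, IsClopen U ∧ IsUpperSet U ∧ x ∈ U ∧ y ∉ U

/-- An L-space: a Priestley space where the closure of every open upset is an open upset. -/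
def IsLSpace (X : Type*) [TopologicalSpace X] [PartialOrder X] : Prop :=
  IsPriestley X ∧
    ∀ U : Set X, IsOpen U → IsUpperSet U → IsOpen (closure U) ∧ IsUpperSet (closure U)

/-- The set `Y` of localic points: those `y` with `↓y` clopen. -/
def localicPts (X : Type*) [TopologicalSpace X] [PartialOrder X] : Set X :=
  {y : X | IsClopen (dwC ({y} : Set X))}

/-- A Scott upset: a closed upset whose minimal points are localic. -/
def IsScottUp (F : Set X) : Prop :=
  IsClosed F ∧ IsUpperSet F ∧ minOf F ⊆ localicPts X

/-- The collection of clopen Scott upsets of `X`. -/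
def ClopSUp (X : Type*) [TopologicalSpace X] [PartialOrder X] : Set (Set X) :=
  {U : Set X | IsClopen U ∧ IsScottUp U}

/-- The core of a clopen upset: the union of the clopen Scott upsets inside it. -/
def coreC (U : Set X) : Set X := ⋃₀ {V : Set X | V ∈ ClopSUp X ∧ V ⊆ U}

/-- An algebraic L-space: the core of each clopen upset is dense in it. -/
def IsAlgebraicLSpace (X : Type*) [TopologicalSpace X] [PartialOrder X] : Prop :=
  IsLSpace X ∧ ∀ U : Set X, IsClopen U → IsUpperSet U → U ⊆ closure (coreC U)

/-- An arithmetic L-space: an algebraic L-space in which the intersection of any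
two clopen Scott upsets is again a Scott upset. -/
def IsArithmeticLSpace (X : Type*) [TopologicalSpace X] [PartialOrder X] : Prop :=
  IsAlgebraicLSpace X ∧
    ∀ U V : Set X, U ∈ ClopSUp X → V ∈ ClopSUp X → IsScottUp (U ∩ V)

/-- A nuclear subset of an L-space. -/
def IsNuclearSub (N : Set X) : Prop :=
  IsClosed N ∧ ∀ U : Set X, IsClopen U → IsClopen (dwC (U ∩ N))

/-- The nucleus `j_N` associated to a nuclear subset: `j_N U = X \ ↓(N \ U)`. -/
def jN (N U : Set X) : Set X := (dwC (N \ U))ᶜ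

/-- A nuclear subset is inductive if `↑(F ∩ N)` is a Scott upset for every Scott upset `F`. -/
def IsInductiveNuclear (N : Set X) : Prop :=
  ∀ F : Set X, IsScottUp F → IsScottUp (upC (F ∩ N))

/-- The pseudocomplement `V* = X \ ↓V`. -/
def starC (V : Set X) : Set X := (dwC V)ᶜ

/-- The `d`-nucleus on clopen upsets: `d U = cl ⋃ {V** : V ∈ ClopSUp X, V ⊆ U}`. -/
def dOp (U : Set X) : Set X :=
  closure (⋃₀ {W : Set X | ∃ V ∈ ClopSUp X, V ⊆ U ∧ W = starC (starC V)})

/-- The `d`-core: `core_d U = ⋃ {d V : V ∈ ClopSUp X, V ⊆ U}`. -/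
def coreD (U : Set X) : Set X :=
  ⋃₀ {W : Set X | ∃ V ∈ ClopSUp X, V ⊆ U ∧ W = dOp V}

/-- The topology on a subset `S ⊆ X` whose opens are (generated by) the traces of
clopen upsets of `X`. -/
def traceTop (S : Set X) : TopologicalSpace S :=
  TopologicalSpace.generateFrom
    {V : Set S | ∃ U : Set X, IsClopen U ∧ IsUpperSet U ∧ V = Subtype.val ⁻¹' U}


section Aux

lemma dwC_mono {A B : Set X} (h : A ⊆ B) : dwC A ⊆ dwC B := by
  rintro x ⟨a, ha, hxa⟩; exact ⟨a, h ha, hxa⟩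

lemma isLowerSet_dwC (A : Set X) : IsLowerSet (dwC A) := by
  rintro a b hba ⟨c, hc, hac⟩; exact ⟨c, hc, hba.trans hac⟩

lemma priestley_sep (hP : IsPriestley X) {U : Set X} (hU : IsClosed U) {z : X}
    (hz : z ∉ dwC U) : ∃ V : Set X, IsClopen V ∧ IsUpperSet V ∧ z ∈ V ∧ V ∩ U = ∅ := by
  haveI : CompactSpace X := hP.1
  have hcmp : IsCompact U := hU.isCompact
  have h : ∀ u : U, ∃ V : Set X, IsClopen V ∧ IsUpperSet V ∧ z ∈ V ∧ (u : X) ∉ V := by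
    intro u
    exact hP.2 z u (fun hle => hz ⟨u, u.2, hle⟩)
  choose W hWc hWu hzW huW using h
  have hcover : U ⊆ ⋃ u : U, (W u)ᶜ := by
    intro u hu
    exact Set.mem_iUnion.2 ⟨⟨u, hu⟩, huW ⟨u, hu⟩⟩
  obtain ⟨t, ht⟩ := hcmp.elim_finite_subcover (fun u : U => (W u)ᶜ)
    (fun u => (hWc u).compl.isOpen) hcover
  refine ⟨⋂ u ∈ t, W u, isClopen_biInter_finset (fun u _ => hWc u), ?_, ?_, ?_⟩
  · intro a b hab ha
    rw [Set.mem_iInter₂] at ha ⊢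
    exact fun u hu => hWu u hab (ha u hu)
  · exact Set.mem_iInter₂.2 fun u _ => hzW u
  · rw [Set.eq_empty_iff_forall_notMem]
    rintro v ⟨hvV, hvU⟩
    obtain ⟨u, hut, hvW⟩ := Set.mem_iUnion₂.1 (ht hvU)
    exact hvW (Set.mem_iInter₂.1 hvV u hut)

lemma dwC_closed (hP : IsPriestley X) {U : Set X} (hU : IsClosed U) : IsClosed (dwC U) := by
  rw [← isOpen_compl_iff, isOpen_iff_forall_mem_open]
  intro z hz
  obtain ⟨V, hVc, hVu, hzV, hVU⟩ := priestley_sep hP hU hz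
  refine ⟨V, ?_, hVc.isOpen, hzV⟩
  rintro v hv ⟨u, hu, hvu⟩
  exact (Set.eq_empty_iff_forall_notMem.1 hVU u) ⟨hVu hvu hv, hu⟩

lemma dwC_clopen (hL : IsLSpace X) {U : Set X} (hUc : IsClopen U) (hUu : IsUpperSet U) :
    IsClopen (dwC U) := by
  have hP := hL.1
  have hclosed : IsClosed (dwC U) := dwC_closed hP hUc.isClosed
  set A : Set X := ⋃₀ {W : Set X | IsClopen W ∧ IsUpperSet W ∧ W ∩ U = ∅} with hA
  have hAopen : IsOpen A := isOpen_sUnion (fun W hW => hW.1.isOpen)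
  have hAup : IsUpperSet A := isUpperSet_sUnion (fun W hW => hW.2.1)
  have hclA := hL.2 A hAopen hAup
  have hclAU : ∀ x, x ∈ closure A → x ∉ U := by
    intro x hxA hxU
    obtain ⟨a, haU, haA⟩ := mem_closure_iff.1 hxA U hUc.isOpen hxU
    obtain ⟨W, hW, haW⟩ := haA
    exact (Set.eq_empty_iff_forall_notMem.1 hW.2.2 a) ⟨haW, haU⟩
  have hclAd : ∀ x, x ∈ closure A → x ∉ dwC U := by
    rintro x hxA ⟨u, huU, hxu⟩
    exact hclAU u (hclA.2 hxu hxA) huU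
  have h1 : (dwC U)ᶜ ⊆ A := by
    intro z hz
    obtain ⟨V, hVc, hVu, hzV, hVU⟩ := priestley_sep hP hUc.isClosed hz
    refine ⟨V, ⟨hVc, hVu, hVU⟩, hzV⟩
  have h2 : closure A ⊆ (dwC U)ᶜ := fun x hx => hclAd x hx
  have heq : (dwC U)ᶜ = closure A := Set.Subset.antisymm (h1.trans subset_closure) h2
  refine ⟨hclosed, ?_⟩
  rw [← isClosed_compl_iff, heq]
  exact isClosed_closure

lemma upC_singleton_closed (hP : IsPriestley X) (x : X) :
    IsClosed (upC ({x} : Set X)) := by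
  rw [← isOpen_compl_iff, isOpen_iff_forall_mem_open]
  intro z hz
  have hxz : ¬ x ≤ z := fun h => hz ⟨x, rfl, h⟩
  obtain ⟨V, hVc, hVu, hxV, hzV⟩ := hP.2 x z hxz
  refine ⟨Vᶜ, ?_, hVc.compl.isOpen, hzV⟩
  rintro w hw ⟨a, ha, haw⟩
  rw [Set.mem_singleton_iff] at ha; subst ha
  exact hw (hVu haw hxV)

lemma mem_starstar {V : Set X} {x : X} :
    x ∈ starC (starC V) ↔ upC ({x} : Set X) ⊆ dwC V := by
  constructor
  · rintro hx z ⟨a, ha, haz⟩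
    rw [Set.mem_singleton_iff] at ha; subst ha
    by_contra hzV
    exact hx ⟨z, hzV, haz⟩
  · rintro h ⟨z, hzV, hxz⟩
    exact hzV (h ⟨x, rfl, hxz⟩)

lemma starstar_mono {A B : Set X} (h : A ⊆ B) : starC (starC A) ⊆ starC (starC B) :=
  Set.compl_subset_compl.2 (dwC_mono (Set.compl_subset_compl.2 (dwC_mono h)))

lemma dOp_eq_starstar (hL : IsLSpace X) {U : Set X} (hU : U ∈ ClopSUp X) :
    dOp U = starC (starC U) := by
  have hS : (⋃₀ {W : Set X | ∃ V ∈ ClopSUp X, V ⊆ U ∧ W = starC (starC V)})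
      = starC (starC U) := by
    apply Set.Subset.antisymm
    · rintro x ⟨W, ⟨V, hV, hVU, rfl⟩, hxW⟩
      exact starstar_mono hVU hxW
    · intro x hx
      exact ⟨starC (starC U), ⟨U, hU, Set.Subset.rfl, rfl⟩, hx⟩
  rw [dOp, hS]
  have hUc : IsClopen U := hU.1
  have hUu : IsUpperSet U := hU.2.2.1
  have h1 : IsClopen (dwC U) := dwC_clopen hL hUc hUu
  have hstarc : IsClopen (starC U) := h1.compl
  have hstaru : IsUpperSet (starC U) := (isLowerSet_dwC U).compl
  have h2 : IsClopen (dwC (starC U)) := dwC_clopen hL hstarc hstaru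
  exact h2.compl.isClosed.closure_eq

end Aux

/-- Let `X` be an arithmetic L-space. Then:
(1) if `U` is a clopen Scott upset, then `d U = U**`; and
(2) for every clopen upset `U` and every `x`, `x ∈ core_d U ↔ ↑x ⊆ ↓(core U)`. -/
theorem statement6 (hX : IsArithmeticLSpace X) :
    (∀ U : Set X, U ∈ ClopSUp X → dOp U = starC (starC U)) ∧
    (∀ U : Set X, IsClopen U → IsUpperSet U →
      ∀ x : X, x ∈ coreD U ↔ upC ({x} : Set X) ⊆ dwC (coreC U)) := by
  have hL : IsLSpace X := hX.1.1
  haveI : CompactSpace X := hL.1.1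
  constructor
  · exact fun U hU => dOp_eq_starstar hL hU
  · intro U hUc hUu x
    constructor
    · rintro ⟨W, ⟨V, hV, hVU, rfl⟩, hxW⟩
      rw [dOp_eq_starstar hL hV] at hxW
      refine (mem_starstar.1 hxW).trans (dwC_mono ?_)
      intro v hv
      exact ⟨V, ⟨hV, hVU⟩, hv⟩
    · intro h
      have hdw : dwC (coreC U) ⊆ ⋃ V : {V : Set X // V ∈ ClopSUp X ∧ V ⊆ U}, dwC V.1 := by
        rintro z ⟨a, ⟨V, hV, haV⟩, hza⟩
        exact Set.mem_iUnion.2 ⟨⟨V, hV⟩, a, haV, hza⟩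
      have hcomp : IsCompact (upC ({x} : Set X)) := (upC_singleton_closed hL.1 x).isCompact
      obtain ⟨t, ht⟩ := hcomp.elim_finite_subcover
        (fun V : {V : Set X // V ∈ ClopSUp X ∧ V ⊆ U} => dwC V.1)
        (fun V => (dwC_clopen hL V.2.1.1 V.2.1.2.2.1).isOpen) (h.trans hdw)
      set V₀ : Set X := ⋃ V ∈ t, (V : {V : Set X // V ∈ ClopSUp X ∧ V ⊆ U}).1 with hV₀def
      have hV₀clopen : IsClopen V₀ := isClopen_biUnion_finset (fun V _ => V.2.1.1)
      have hV₀up : IsUpperSet V₀ := by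
        rintro a b hab ha
        obtain ⟨V, hVt, hmem⟩ := Set.mem_iUnion₂.1 ha
        exact Set.mem_iUnion₂.2 ⟨V, hVt, V.2.1.2.2.1 hab hmem⟩
      have hV₀min : minOf V₀ ⊆ localicPts X := by
        rintro m ⟨hmV, hmin⟩
        obtain ⟨V, hVt, hmem⟩ := Set.mem_iUnion₂.1 hmV
        exact V.2.1.2.2.2 ⟨hmem, fun z hz hzm => hmin z (Set.mem_iUnion₂.2 ⟨V, hVt, hz⟩) hzm⟩
      have hV₀U : V₀ ⊆ U := by
        rintro v hv
        obtain ⟨V, hVt, hmem⟩ := Set.mem_iUnion₂.1 hv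
        exact V.2.2 hmem
      have hV₀mem : V₀ ∈ ClopSUp X := ⟨hV₀clopen, hV₀clopen.isClosed, hV₀up, hV₀min⟩
      have hxd : x ∈ dOp V₀ := by
        rw [dOp_eq_starstar hL hV₀mem]
        refine mem_starstar.2 ?_
        intro z hz
        obtain ⟨V, hVt, a, haV, hza⟩ := Set.mem_iUnion₂.1 (ht hz)
        exact ⟨a, Set.mem_iUnion₂.2 ⟨V, hVt, haV⟩, hza⟩
      exact ⟨dOp V₀, ⟨V₀, hV₀mem, hV₀U, rfl⟩, hxd⟩
end

section
/- Let X be an arithmetic L-space. If F and G are Scott upsets of X, then F ∩ G is a Scott upset of X. -/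
open Set Topology

variable {X : Type*} [TopologicalSpace X] [PartialOrder X]

section Aux

omit [TopologicalSpace X] in
lemma mem_dwC_singleton {x z : X} : z ∈ dwC ({x} : Set X) ↔ z ≤ x :=
  ⟨fun ⟨a, ha, h⟩ => ha ▸ h, fun h => ⟨x, rfl, h⟩⟩

lemma isClosed_dwC_singleton (hP : IsPriestley X) (x : X) :
    IsClosed (dwC ({x} : Set X)) := by
  rw [← isOpen_compl_iff, isOpen_iff_mem_nhds]
  intro z hz
  have hzx : ¬ z ≤ x := fun h => hz (mem_dwC_singleton.mpr h)
  obtain ⟨U, hUc, hUu, hzU, hxU⟩ := hP.2 z x hzx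
  refine Filter.mem_of_superset (hUc.2.mem_nhds hzU) fun w hw hwx => ?_
  exact hxU (hUu (mem_dwC_singleton.mp hwx) hw)

lemma exists_minimal_le (hP : IsPriestley X) {A : Set X} (hA : IsClosed A)
    {a : X} (ha : a ∈ A) : ∃ m ∈ minOf A, m ≤ a := by
  haveI : CompactSpace X := hP.1
  set S : Set X := A ∩ dwC ({a} : Set X) with hS
  have hSclosed : IsClosed S := hA.inter (isClosed_dwC_singleton hP a)
  have haS : a ∈ S := ⟨ha, mem_dwC_singleton.mpr le_rfl⟩
  set S' : Set Xᵒᵈ := OrderDual.ofDual ⁻¹' S with hS'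
  have ih : ∀ c ⊆ S', IsChain (· ≤ ·) c → ∀ y ∈ c,
      ∃ ub ∈ S', ∀ z ∈ c, z ≤ ub := by
    intro c hc hchain y hy
    haveI : Nonempty c := ⟨⟨y, hy⟩⟩
    set T : c → Set X := fun z => S ∩ dwC ({OrderDual.ofDual (z : Xᵒᵈ)} : Set X) with hT
    have hTc : ∀ z : c, IsClosed (T z) :=
      fun z => hSclosed.inter (isClosed_dwC_singleton hP _)
    have hTn : ∀ z : c, (T z).Nonempty :=
      fun z => ⟨OrderDual.ofDual (z : Xᵒᵈ), hc z.2, mem_dwC_singleton.mpr le_rfl⟩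
    have hdir : Directed (· ⊇ ·) T := by
      intro z w
      rcases eq_or_ne (z : Xᵒᵈ) (w : Xᵒᵈ) with h | h
      · exact ⟨z, by simp [hT, h], by simp [hT, h]⟩
      · rcases hchain z.2 w.2 h with h' | h'
        · have hle : OrderDual.ofDual (w : Xᵒᵈ) ≤ OrderDual.ofDual (z : Xᵒᵈ) :=
            OrderDual.ofDual_le_ofDual.mpr h'
          exact ⟨w, inter_subset_inter_right _ (fun u hu =>
            mem_dwC_singleton.mpr ((mem_dwC_singleton.mp hu).trans hle)), le_refl _⟩
        · have hle : OrderDual.ofDual (z : Xᵒᵈ) ≤ OrderDual.ofDual (w : Xᵒᵈ) :=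
            OrderDual.ofDual_le_ofDual.mpr h'
          exact ⟨z, le_refl _, inter_subset_inter_right _ (fun u hu =>
            mem_dwC_singleton.mpr ((mem_dwC_singleton.mp hu).trans hle))⟩
    obtain ⟨b, hb⟩ := IsCompact.nonempty_iInter_of_directed_nonempty_isCompact_isClosed
      T hdir hTn (fun z => (hTc z).isCompact) hTc
    simp only [mem_iInter] at hb
    refine ⟨OrderDual.toDual b, (hb ⟨y, hy⟩).1, fun z hz => ?_⟩
    have hb2 : b ≤ OrderDual.ofDual z := mem_dwC_singleton.mp (hb ⟨z, hz⟩).2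
    exact hb2
  obtain ⟨m, ham, hm⟩ := zorn_le_nonempty₀ S' ih (OrderDual.toDual a) haS
  have hmS : OrderDual.ofDual m ∈ S := hm.1
  refine ⟨OrderDual.ofDual m, ⟨hmS.1, fun z hz hzm => ?_⟩,
    mem_dwC_singleton.mp hmS.2⟩
  have hzS : OrderDual.toDual z ∈ S' :=
    ⟨hz, mem_dwC_singleton.mpr (hzm.trans (mem_dwC_singleton.mp hmS.2))⟩
  have h1 : m ≤ OrderDual.toDual z := hzm
  have h2 : OrderDual.ofDual m ≤ z := hm.2 hzS h1
  exact le_antisymm hzm h2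

/-- Separating a closed upset from an outside point by a clopen upset. -/
lemma exists_clopen_upset_sep (hP : IsPriestley X) {F : Set X} (hFc : IsClosed F)
    (hFu : IsUpperSet F) {x : X} (hx : x ∉ F) :
    ∃ U : Set X, IsClopen U ∧ IsUpperSet U ∧ F ⊆ U ∧ x ∉ U := by
  haveI : CompactSpace X := hP.1
  have hsep : ∀ f : F, ∃ U : Set X, IsClopen U ∧ IsUpperSet U ∧ (f : X) ∈ U ∧ x ∉ U :=
    fun f => hP.2 f x (fun h => hx (hFu h f.2))
  choose U hU using hsep
  have hcov : F ⊆ ⋃ f : F, U f := fun f hf => mem_iUnion.mpr ⟨⟨f, hf⟩, (hU ⟨f, hf⟩).2.2.1⟩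
  obtain ⟨t, ht⟩ := hFc.isCompact.elim_finite_subcover U (fun f => (hU f).1.2) hcov
  refine ⟨⋃ f ∈ t, U f, isClopen_biUnion_finset (fun f _ => (hU f).1), ?_, ht, ?_⟩
  · exact isUpperSet_iUnion₂ (fun f _ => (hU f).2.1)
  · intro hxm
    obtain ⟨f, _, hf⟩ := mem_iUnion₂.mp hxm
    exact (hU f).2.2.2 hf

lemma clopSUp_biUnion_finset {ι : Type*} {t : Finset ι} {V : ι → Set X}
    (hV : ∀ i ∈ t, V i ∈ ClopSUp X) : (⋃ i ∈ t, V i) ∈ ClopSUp X := by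
  have hclopen : IsClopen (⋃ i ∈ t, V i) := isClopen_biUnion_finset (fun i hi => (hV i hi).1)
  refine ⟨hclopen, hclopen.1, isUpperSet_iUnion₂ (fun i hi => (hV i hi).2.2.1), ?_⟩
  intro z hz
  obtain ⟨i, hi, hzi⟩ := mem_iUnion₂.mp hz.1
  refine (hV i hi).2.2.2 ⟨hzi, fun u hu hule => ?_⟩
  exact hz.2 u (mem_iUnion₂.mpr ⟨i, hi, hu⟩) hule

/-- In an algebraic L-space, between a Scott upset and a clopen upset containing it,
there is a clopen Scott upset. -/
lemma exists_clopSUp_between (hA : IsAlgebraicLSpace X) {F U : Set X}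
    (hF : IsScottUp F) (hUc : IsClopen U) (hUu : IsUpperSet U) (hFU : F ⊆ U) :
    ∃ V ∈ ClopSUp X, F ⊆ V ∧ V ⊆ U := by
  have hP : IsPriestley X := hA.1.1
  haveI : CompactSpace X := hP.1
  have key : ∀ y : minOf F, ∃ V : Set X, V ∈ ClopSUp X ∧ V ⊆ U ∧ (y : X) ∈ V := by
    rintro ⟨y, hy⟩
    have hyY : y ∈ localicPts X := hF.2.2 hy
    have hdense : y ∈ closure (coreC U) := hA.2 U hUc hUu (hFU hy.1)
    have hnb : dwC ({y} : Set X) ∈ 𝓝 y := hyY.2.mem_nhds (mem_dwC_singleton.mpr le_rfl)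
    obtain ⟨w, hw1, hw2⟩ := mem_closure_iff_nhds.mp hdense _ hnb
    obtain ⟨V, ⟨hVmem, hVU⟩, hwV⟩ := hw2
    exact ⟨V, hVmem, hVU, hVmem.2.2.1 (mem_dwC_singleton.mp hw1) hwV⟩
  choose V hV using key
  have hcov : F ⊆ ⋃ y : minOf F, V y := by
    intro a ha
    obtain ⟨m, hm, hma⟩ := exists_minimal_le hP hF.1 ha
    exact mem_iUnion.mpr ⟨⟨m, hm⟩, (hV ⟨m, hm⟩).1.2.2.1 hma (hV ⟨m, hm⟩).2.2⟩
  obtain ⟨t, ht⟩ := hF.1.isCompact.elim_finite_subcover V (fun y => (hV y).1.1.2) hcov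
  refine ⟨⋃ y ∈ t, V y, clopSUp_biUnion_finset (fun y _ => (hV y).1), ht, ?_⟩
  exact iUnion₂_subset (fun y _ => (hV y).2.1)

/-- In an algebraic L-space, a Scott upset is the intersection of the clopen
Scott upsets containing it: separation form. -/
lemma exists_clopSUp_sep (hA : IsAlgebraicLSpace X) {F : Set X}
    (hF : IsScottUp F) {x : X} (hx : x ∉ F) :
    ∃ V ∈ ClopSUp X, F ⊆ V ∧ x ∉ V := by
  obtain ⟨U, hUc, hUu, hFU, hxU⟩ := exists_clopen_upset_sep hA.1.1 hF.1 hF.2.1 hx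
  obtain ⟨V, hV, hFV, hVU⟩ := exists_clopSUp_between hA hF hUc hUu hFU
  exact ⟨V, hV, hFV, fun h => hxU (hVU h)⟩

end Aux

/-- In an arithmetic L-space, the intersection of two Scott upsets is
a Scott upset. -/
theorem statement9 (hX : IsArithmeticLSpace X) (F G : Set X)
    (hF : IsScottUp F) (hG : IsScottUp G) : IsScottUp (F ∩ G) := by
  obtain ⟨hAlg, hArith⟩ := hX
  have hL : IsLSpace X := hAlg.1
  have hP : IsPriestley X := hL.1
  haveI : CompactSpace X := hP.1
  refine ⟨hF.1.inter hG.1, hF.2.1.inter hG.2.1, ?_⟩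
  intro x hx
  -- the directed family of clopen Scott upsets approximating F ∩ G
  set D : Set (Set X) :=
    {A | ∃ V ∈ ClopSUp X, ∃ W ∈ ClopSUp X, F ⊆ V ∧ G ⊆ W ∧ A = V ∩ W} with hD
  have hDmem : ∀ A ∈ D, A ∈ ClopSUp X ∧ F ∩ G ⊆ A := by
    rintro A ⟨V, hV, W, hW, hFV, hGW, rfl⟩
    exact ⟨⟨hV.1.inter hW.1, hArith V W hV hW⟩, inter_subset_inter hFV hGW⟩
  have hDne : D.Nonempty := by
    obtain ⟨V, hV, hFV, -⟩ :=
      exists_clopSUp_between hAlg hF isClopen_univ isUpperSet_univ (subset_univ F)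
    obtain ⟨W, hW, hGW, -⟩ :=
      exists_clopSUp_between hAlg hG isClopen_univ isUpperSet_univ (subset_univ G)
    exact ⟨V ∩ W, V, hV, W, hW, hFV, hGW, rfl⟩
  have hDdir : ∀ A ∈ D, ∀ B ∈ D, A ∩ B ∈ D := by
    rintro A ⟨V, hV, W, hW, hFV, hGW, rfl⟩ B ⟨V', hV', W', hW', hFV', hGW', rfl⟩
    refine ⟨V ∩ V', ⟨hV.1.inter hV'.1, hArith V V' hV hV'⟩,
      W ∩ W', ⟨hW.1.inter hW'.1, hArith W W' hW hW'⟩,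
      subset_inter hFV hFV', subset_inter hGW hGW', ?_⟩
    ext u; constructor <;> (intro hu; exact ⟨⟨hu.1.1, hu.2.1⟩, hu.1.2, hu.2.2⟩)
  have hDsep : ∀ z, z ∉ F ∩ G → ∃ A ∈ D, z ∉ A := by
    intro z hz
    obtain ⟨V₀, hV₀, hFV₀, -⟩ :=
      exists_clopSUp_between hAlg hF isClopen_univ isUpperSet_univ (subset_univ F)
    obtain ⟨W₀, hW₀, hGW₀, -⟩ :=
      exists_clopSUp_between hAlg hG isClopen_univ isUpperSet_univ (subset_univ G)
    rcases not_and_or.mp hz with hzF | hzG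
    · obtain ⟨V, hV, hFV, hzV⟩ := exists_clopSUp_sep hAlg hF hzF
      exact ⟨V ∩ W₀, ⟨V, hV, W₀, hW₀, hFV, hGW₀, rfl⟩, fun h => hzV h.1⟩
    · obtain ⟨W, hW, hGW, hzW⟩ := exists_clopSUp_sep hAlg hG hzG
      exact ⟨V₀ ∩ W, ⟨V₀, hV₀, W, hW, hFV₀, hGW, rfl⟩, fun h => hzW h.2⟩
  -- the closed sets K A = cl (Y ∩ A ∩ ↓x), A ∈ D
  haveI : Nonempty D := ⟨⟨hDne.choose, hDne.choose_spec⟩⟩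
  set K : D → Set X := fun A => closure (localicPts X ∩ (A : Set X) ∩ dwC ({x} : Set X))
    with hK
  have hxA : ∀ A : D, x ∈ (A : Set X) := fun A => (hDmem A A.2).2 hx.1
  have hKsub : ∀ A : D, K A ⊆ (A : Set X) ∩ dwC ({x} : Set X) := by
    intro A
    refine closure_minimal (fun u hu => ⟨hu.1.2, hu.2⟩) ?_
    exact ((hDmem A A.2).1.2.1).inter (isClosed_dwC_singleton hP x)
  have hKne : ∀ A : D, (K A).Nonempty := by
    intro A
    obtain ⟨m, hm, hmx⟩ := exists_minimal_le hP (hDmem A A.2).1.2.1 (hxA A)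
    exact ⟨m, subset_closure ⟨⟨(hDmem A A.2).1.2.2.2 hm, hm.1⟩, mem_dwC_singleton.mpr hmx⟩⟩
  have hKdir : Directed (· ⊇ ·) K := by
    intro A B
    refine ⟨⟨A ∩ B, hDdir A A.2 B B.2⟩, ?_, ?_⟩ <;>
      exact closure_mono (fun u hu => ⟨⟨hu.1.1, by
        first
          | exact (hu.1.2 : u ∈ (A : Set X) ∩ B).1
          | exact (hu.1.2 : u ∈ (A : Set X) ∩ B).2⟩, hu.2⟩)
  obtain ⟨z, hz⟩ := IsCompact.nonempty_iInter_of_directed_nonempty_isCompact_isClosed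
    K hKdir hKne (fun A => isClosed_closure.isCompact) (fun A => isClosed_closure)
  simp only [mem_iInter] at hz
  -- z lies in every A ∈ D and below x, hence z = x
  have hzx : z ≤ x := mem_dwC_singleton.mp (hKsub _ (hz (Classical.arbitrary D))).2
  have hzFG : z ∈ F ∩ G := by
    by_contra hzn
    obtain ⟨A, hA, hzA⟩ := hDsep z hzn
    exact hzA (hKsub ⟨A, hA⟩ (hz ⟨A, hA⟩)).1
  have hzeq : z = x := hx.2 z hzFG hzx
  -- hence x is in the closure of the localic points of A below x, for any A
  have hxK : x ∈ K (Classical.arbitrary D) := hzeq ▸ hz (Classical.arbitrary D)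
  -- L-space argument: x is localic
  have hdx : IsClosed (dwC ({x} : Set X)) := isClosed_dwC_singleton hP x
  set U : Set X := (dwC ({x} : Set X))ᶜ with hU
  have hUopen : IsOpen U := hdx.isOpen_compl
  have hUup : IsUpperSet U := by
    intro a b hab ha hb
    exact ha (mem_dwC_singleton.mpr (le_trans hab (mem_dwC_singleton.mp hb)))
  obtain ⟨hCopen, hCup⟩ := hL.2 U hUopen hUup
  have hxC : x ∉ closure U := by
    intro hxc
    obtain ⟨y, hyC, hyY, hyA, hyx⟩ :
        ∃ y, y ∈ closure U ∧ y ∈ localicPts X ∧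
          y ∈ ((Classical.arbitrary D : D) : Set X) ∧ y ≤ x := by
      obtain ⟨y, hy1, hy2⟩ := mem_closure_iff_nhds.mp hxK _ (hCopen.mem_nhds hxc)
      exact ⟨y, hy1, hy2.1.1, hy2.1.2, mem_dwC_singleton.mp hy2.2⟩
    have hOopen : IsOpen (closure U ∩ dwC ({y} : Set X)) := hCopen.inter hyY.2
    have hyO : y ∈ closure U ∩ dwC ({y} : Set X) := ⟨hyC, mem_dwC_singleton.mpr le_rfl⟩
    obtain ⟨w, hwO, hwU⟩ := mem_closure_iff_nhds.mp hyC _ (hOopen.mem_nhds hyO)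
    exact hwU (mem_dwC_singleton.mpr ((mem_dwC_singleton.mp hwO.2).trans hyx))
  have hCU : closure U = U := by
    apply Subset.antisymm _ subset_closure
    intro c hc
    intro hcx
    exact hxC (hCup (mem_dwC_singleton.mp hcx) hc)
  have : IsOpen (dwC ({x} : Set X)) := by
    have : IsClosed U := hCU ▸ isClosed_closure
    simpa [hU] using this.isOpen_compl
  exact ⟨hdx, this⟩
end

section
/- Let X be an algebraic L-space. If N ⊆ X is a cofinal inductive nuclear subset, then max Y ⊆ N, where max Y is the set of maximal localic points of X. -/
open Set Topology

variable {X : Type*} [TopologicalSpace X] [PartialOrder X]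

section Aux

lemma isClosed_Ici' (hP : IsPriestley X) (z : X) : IsClosed (Set.Ici z) := by
  rw [← isOpen_compl_iff]
  rw [isOpen_iff_forall_mem_open]
  intro x hx
  obtain ⟨U, hU, hUp, hzU, hxU⟩ := hP.2 z x (by simpa using hx)
  exact ⟨Uᶜ, fun w hw hw2 => hw (hUp hw2 hzU), hU.compl.isOpen, hxU⟩

lemma isClosed_Iic' (hP : IsPriestley X) (z : X) : IsClosed (Set.Iic z) := by
  rw [← isOpen_compl_iff, isOpen_iff_forall_mem_open]
  intro x hx
  obtain ⟨U, hU, hUp, hxU, hzU⟩ := hP.2 x z (by simpa using hx)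
  exact ⟨U, fun w hw hw2 => hzU (hUp hw2 hw), hU.isOpen, hxU⟩

lemma exists_max_above (hP : IsPriestley X) (y : X) : ∃ m, y ≤ m ∧ IsMax m := by
  haveI := hP.1
  refine zorn_le_nonempty_Ici₀ y (fun c hc hchain y₀ hy₀ => ?_) y le_rfl
  haveI : Nonempty c := ⟨⟨y₀, hy₀⟩⟩
  obtain ⟨ub, hub⟩ := IsCompact.nonempty_iInter_of_directed_nonempty_isCompact_isClosed
    (fun z : c => Set.Ici (z : X))
    (fun a b => by
      rcases hchain.total a.2 b.2 with h | h
      · exact ⟨b, Set.Ici_subset_Ici.2 h, le_refl _⟩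
      · exact ⟨a, le_refl _, Set.Ici_subset_Ici.2 h⟩)
    (fun z => ⟨z, le_rfl⟩)
    (fun z => (isClosed_Ici' hP _).isCompact)
    (fun z => isClosed_Ici' hP _)
  exact ⟨ub, fun z hz => by simpa using Set.mem_iInter.1 hub ⟨z, hz⟩⟩

lemma exists_min_in (hP : IsPriestley X) {G : Set X} (hG : IsClosed G) {m : X} (hm : m ∈ G) :
    ∃ z ∈ G, ∀ w ∈ G, w ≤ z → w = z := by
  haveI := hP.1
  have ih : ∀ c ⊆ G, IsChain (α := Xᵒᵈ) (· ≤ ·) c → ∀ y₀ ∈ c,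
      ∃ ub ∈ G, ∀ z ∈ c, ub ≤ z := ?_
  · obtain ⟨z, _, hzG, hmin⟩ := zorn_le_nonempty₀ (α := Xᵒᵈ) G
      (fun c hcG hch y hy => ih c hcG hch y hy) m hm
    exact ⟨z, hzG, fun w hw hwz => le_antisymm hwz (hmin hw hwz)⟩
  intro c hc hchain y₀ hy₀
  haveI : Nonempty c := ⟨⟨y₀, hy₀⟩⟩
  obtain ⟨lb, hlb⟩ := IsCompact.nonempty_iInter_of_directed_nonempty_isCompact_isClosed
    (X := X)
    (fun z : c => Set.Iic (z : X) ∩ G)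
    (fun a b => by
      rcases hchain.total a.2 b.2 with h | h
      · exact ⟨b, Set.inter_subset_inter_left _ (Set.Iic_subset_Iic.2 h), le_refl _⟩
      · exact ⟨a, le_refl _, Set.inter_subset_inter_left _ (Set.Iic_subset_Iic.2 h)⟩)
    (fun z => ⟨(z : X), le_rfl, hc z.2⟩)
    (fun z => ((isClosed_Iic' hP _).inter hG).isCompact)
    (fun z => (isClosed_Iic' hP _).inter hG)
  refine ⟨lb, (Set.mem_iInter.1 hlb ⟨y₀, hy₀⟩).2, fun z hz => ?_⟩
  exact (Set.mem_iInter.1 hlb ⟨z, hz⟩).1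

end Aux

/-- Let `X` be an algebraic L-space. If `N` is a cofinal inductive
nuclear subset of `X`, then `max Y ⊆ N`. -/
theorem statement11 (hX : IsAlgebraicLSpace X) (N : Set X)
    (hN : IsNuclearSub N) (hcof : maxOf (Set.univ : Set X) ⊆ N)
    (hind : IsInductiveNuclear N) : maxOf (localicPts X) ⊆ N := by
  intro y hy
  obtain ⟨hyY, hymax⟩ := hy
  have hP : IsPriestley X := hX.1.1
  -- F = ↑y is a Scott upset
  have hFeq : upC ({y} : Set X) = Set.Ici y := by
    ext x; constructor
    · rintro ⟨a, rfl, h⟩; exact h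
    · intro h; exact ⟨y, rfl, h⟩
  have hF : IsScottUp (upC ({y} : Set X)) := by
    refine ⟨hFeq ▸ isClosed_Ici' hP y, ?_, ?_⟩
    · intro a b hab ⟨c, hc, hca⟩; exact ⟨c, hc, hca.trans hab⟩
    · rintro z ⟨⟨a, rfl, haz⟩, hzmin⟩
      have : a = z := hzmin a ⟨a, rfl, le_rfl⟩ haz
      exact this ▸ hyY
  -- G = ↑(F ∩ N) is a Scott upset
  have hG : IsScottUp (upC (upC ({y} : Set X) ∩ N)) := hind _ hF
  -- a maximal point above y, which lies in N
  obtain ⟨m, hym, hmmax⟩ := exists_max_above hP y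
  have hmN : m ∈ N := hcof ⟨trivial, fun z _ hz => le_antisymm (hmmax hz) hz⟩
  have hmG : m ∈ upC (upC ({y} : Set X) ∩ N) := ⟨m, ⟨⟨y, rfl, hym⟩, hmN⟩, le_rfl⟩
  -- a minimal point z₀ of G is localic
  obtain ⟨z₀, hz₀G, hz₀min⟩ := exists_min_in hP hG.1 hmG
  have hz₀Y : z₀ ∈ localicPts X := hG.2.2 ⟨hz₀G, hz₀min⟩
  obtain ⟨w, ⟨⟨a, ha, haw⟩, hwN⟩, hwz⟩ := hz₀G
  rw [Set.mem_singleton_iff] at ha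
  have hyw : y ≤ w := by rw [← ha]; exact haw
  -- y ≤ w ≤ z₀ with z₀ localic forces z₀ = y, hence w = y ∈ N
  have hz₀y : z₀ = y := hymax z₀ hz₀Y (hyw.trans hwz)
  have hwy : w = y := le_antisymm (hz₀y ▸ hwz) hyw
  exact hwy ▸ hwN
end
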